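/- arXiv:1409.8621 — 2 statements merged into one kernel-verified Lean document; each statement's English description precedes it below -/
import Mathlib

section
/- Let (F_n) be a sequence of probability measures on R^2 with continuous margins converging weakly to a probability measure F_0 with continuous margins. Then the copulas C_n = T(F_n) converge to C_0 = T(F_0) uniformly on [0,1]^2. -/
open MeasureTheory ProbabilityTheory Set Filter

noncomputable section

/-- First marginal of a measure on `ℝ × ℝ`. -/
def margFst (μ : Measure (ℝ × ℝ)) : Measure ℝ := μ.map Prod.fst

/-- Second marginal of a measure on `ℝ × ℝ`. -/
def margSnd (μ : Measure (ℝ × ℝ)) : Measure ℝ := μ.map Prod.snd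

/-- Both margins are continuous (atomless) distributions. -/
def ContinuousMargins (μ : Measure (ℝ × ℝ)) : Prop :=
  ∀ x : ℝ, margFst μ {x} = 0 ∧ margSnd μ {x} = 0

/-- Convolution of two measures on `ℝ × ℝ`. -/
def mconv (μ ν : Measure (ℝ × ℝ)) : Measure (ℝ × ℝ) :=
  (μ.prod ν).map (fun p => p.1 + p.2)

/-- A two-dimensional copula: grounded, uniform margins, and 2-increasing on `[0,1]²`. -/
def IsCopula (C : ℝ → ℝ → ℝ) : Prop :=
  (∀ u ∈ Icc (0:ℝ) 1, C u 0 = 0 ∧ C 0 u = 0 ∧ C u 1 = u ∧ C 1 u = u) ∧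
  (∀ u₁ u₂ v₁ v₂ : ℝ, u₁ ∈ Icc (0:ℝ) 1 → u₂ ∈ Icc (0:ℝ) 1 → v₁ ∈ Icc (0:ℝ) 1 →
    v₂ ∈ Icc (0:ℝ) 1 → u₁ ≤ u₂ → v₁ ≤ v₂ →
    0 ≤ C u₂ v₂ - C u₂ v₁ - C u₁ v₂ + C u₁ v₁)

/-- Joint cumulative distribution function of a measure on `ℝ × ℝ`. -/
def cdf2 (μ : Measure (ℝ × ℝ)) (x y : ℝ) : ℝ := (μ (Iic x ×ˢ Iic y)).toReal

/-- `C` is the copula of `μ` (Sklar relation). -/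
def IsCopulaOf (C : ℝ → ℝ → ℝ) (μ : Measure (ℝ × ℝ)) : Prop :=
  IsCopula C ∧ ∀ x y : ℝ, cdf2 μ x y = C (cdf (margFst μ) x) (cdf (margSnd μ) y)

/-!
Copulas are 1-Lipschitz in each variable, so the copulas `C n` form an equicontinuous family
on the compact square and uniform convergence follows from pointwise convergence. At an interior
point `(u, v)`, continuity of the limit margins gives `x, y` with `u = F₀₁(x)` and
`v = F₀₂(y)`. The limit charges no line through `(x, y)`, so by the portmanteau theorem the
margins and the joint distribution function of `F n` converge at `(x, y)`, and Sklar's relation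
`C n (F_{n1}(x), F_{n2}(y)) = F_n(x, y)` together with the Lipschitz bound transfers this to
`C n u v`. On the boundary of the square all copulas agree.
-/

open Topology

theorem EquicontinuousOn.tendstoUniformlyOn_of_tendsto {ι X α : Type*} [TopologicalSpace X]
    [UniformSpace α] {F : ι → X → α} {f : X → α} {L : Filter ι} {K : Set X}
    (hK : IsCompact K) (hF : EquicontinuousOn F K)
    (h : ∀ x ∈ K, Tendsto (fun i => F i x) L (𝓝 (f x))) :
    TendstoUniformlyOn F f L K := by
  have key := (EquicontinuousOn.tendsto_uniformOnFun_iff_pi' (𝔖 := {K}) (by simpa using hK)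
    (by simpa using hF) L f).2 (by
      rw [sUnion_singleton, tendsto_pi_nhds]
      exact fun x => h x x.2)
  exact UniformOnFun.tendsto_iff_tendstoUniformlyOn.1 key K rfl

namespace IsCopula

variable {C : ℝ → ℝ → ℝ}

lemma swap (hC : IsCopula C) : IsCopula (fun u v => C v u) := by
  refine ⟨fun u hu => ?_, fun u₁ u₂ v₁ v₂ hu₁ hu₂ hv₁ hv₂ hu hv => ?_⟩
  · obtain ⟨h₁, h₂, h₃, h₄⟩ := hC.1 u hu
    exact ⟨h₂, h₁, h₄, h₃⟩
  · have := hC.2 v₁ v₂ u₁ u₂ hv₁ hv₂ hu₁ hu₂ hv hu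
    linarith

lemma abs_sub_le_left (hC : IsCopula C) {u₁ u₂ v : ℝ} (hu₁ : u₁ ∈ Icc (0:ℝ) 1)
    (hu₂ : u₂ ∈ Icc (0:ℝ) 1) (hv : v ∈ Icc (0:ℝ) 1) :
    |C u₂ v - C u₁ v| ≤ |u₂ - u₁| := by
  have h0 : (0:ℝ) ∈ Icc (0:ℝ) 1 := left_mem_Icc.2 zero_le_one
  have h1 : (1:ℝ) ∈ Icc (0:ℝ) 1 := right_mem_Icc.2 zero_le_one
  -- the rectangles `[a, b] × [0, v]` and `[a, b] × [v, 1]` have nonnegative mass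
  have key : ∀ a b, a ∈ Icc (0:ℝ) 1 → b ∈ Icc (0:ℝ) 1 → a ≤ b →
      0 ≤ C b v - C a v ∧ C b v - C a v ≤ b - a := by
    intro a b ha hb hab
    have lower := hC.2 a b 0 v ha hb h0 hv hab hv.1
    have upper := hC.2 a b v 1 ha hb hv h1 hab hv.2
    rw [(hC.1 a ha).1, (hC.1 b hb).1] at lower
    rw [(hC.1 a ha).2.2.1, (hC.1 b hb).2.2.1] at upper
    constructor <;> linarith
  rcases le_total u₁ u₂ with h | h
  · obtain ⟨hpos, hle⟩ := key u₁ u₂ hu₁ hu₂ h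
    rw [abs_of_nonneg hpos, abs_of_nonneg (sub_nonneg.2 h)]
    exact hle
  · obtain ⟨hpos, hle⟩ := key u₂ u₁ hu₂ hu₁ h
    rw [abs_sub_comm, abs_of_nonneg hpos, abs_sub_comm, abs_of_nonneg (sub_nonneg.2 h)]
    exact hle

lemma lipschitzOnWith (hC : IsCopula C) :
    LipschitzOnWith 2 (fun p : ℝ × ℝ => C p.1 p.2) (Icc (0:ℝ) 1 ×ˢ Icc (0:ℝ) 1) := by
  refine LipschitzOnWith.of_dist_le_mul fun p hp q hq => ?_
  have hu := hC.abs_sub_le_left hq.1 hp.1 hp.2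
  have hv := hC.swap.abs_sub_le_left hq.2 hp.2 hq.1
  rw [Real.dist_eq, Prod.dist_eq, Real.dist_eq, Real.dist_eq]
  calc |C p.1 p.2 - C q.1 q.2| ≤ |C p.1 p.2 - C q.1 p.2| + |C q.1 p.2 - C q.1 q.2| :=
        abs_sub_le _ _ _
    _ ≤ 2 * max |p.1 - q.1| |p.2 - q.2| := by
        linarith [le_max_left |p.1 - q.1| |p.2 - q.2|, le_max_right |p.1 - q.1| |p.2 - q.2|]

lemma eq_of_mem_boundary {D : ℝ → ℝ → ℝ} (hC : IsCopula C) (hD : IsCopula D) {u v : ℝ}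
    (hu : u ∈ Icc (0:ℝ) 1) (hv : v ∈ Icc (0:ℝ) 1)
    (h : u ∈ ({0, 1} : Set ℝ) ∨ v ∈ ({0, 1} : Set ℝ)) :
    C u v = D u v := by
  obtain ⟨hCv0, hC0v, hCv1, hC1v⟩ := hC.1 v hv
  obtain ⟨hDv0, hD0v, hDv1, hD1v⟩ := hD.1 v hv
  obtain ⟨hCu0, hC0u, hCu1, hC1u⟩ := hC.1 u hu
  obtain ⟨hDu0, hD0u, hDu1, hD1u⟩ := hD.1 u hu
  rcases h with (rfl | rfl) | (rfl | rfl) <;> simp_all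

end IsCopula

section Cdf

variable (μ : Measure ℝ) [IsProbabilityMeasure μ] [NullSingletonClass μ]

lemma continuous_cdf : Continuous (cdf μ) := by
  refine continuous_iff_continuousAt.2 fun x => ?_
  rw [(monotone_cdf μ).continuousAt_iff_leftLim_eq_rightLim, StieltjesFunction.rightLim_eq]
  have hjump : (cdf μ).measure {x} = 0 := by rw [measure_cdf]; exact measure_singleton x
  rw [StieltjesFunction.measure_singleton, ENNReal.ofReal_eq_zero] at hjump
  exact le_antisymm ((monotone_cdf μ).leftLim_le le_rfl) (sub_nonpos.1 hjump)

lemma Ioo_subset_range_cdf : Ioo (0:ℝ) 1 ⊆ range (cdf μ) := by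
  intro u ⟨hu0, hu1⟩
  obtain ⟨a, ha⟩ := ((tendsto_cdf_atBot μ).eventually_lt_const hu0).exists
  obtain ⟨b, hb⟩ := ((tendsto_cdf_atTop μ).eventually_const_lt hu1).exists
  have hab : a ≤ b := ((monotone_cdf μ).reflect_lt (ha.trans hb)).le
  obtain ⟨x, -, hx⟩ := intermediate_value_Icc hab (continuous_cdf μ).continuousOn
    ⟨ha.le, hb.le⟩
  exact ⟨x, hx⟩

end Cdf

lemma tendsto_measureReal_of_null_frontier {Ω ι : Type*} [MeasurableSpace Ω]
    [PseudoEMetricSpace Ω] [OpensMeasurableSpace Ω] {L : Filter ι}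
    {μs : ι → Measure Ω} {μ : Measure Ω} [∀ i, IsProbabilityMeasure (μs i)]
    [IsProbabilityMeasure μ]
    (hweak : ∀ f : BoundedContinuousFunction Ω ℝ,
      Tendsto (fun i => ∫ x, f x ∂(μs i)) L (𝓝 (∫ x, f x ∂μ)))
    {E : Set Ω} (hE : μ (frontier E) = 0) :
    Tendsto (fun i => (μs i).real E) L (𝓝 (μ.real E)) := by
  let P : ι → ProbabilityMeasure Ω := fun i => ⟨μs i, inferInstance⟩
  let P₀ : ProbabilityMeasure Ω := ⟨μ, inferInstance⟩
  have hP : Tendsto P L (𝓝 P₀) := ProbabilityMeasure.tendsto_iff_forall_integral_tendsto.2 hweak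
  exact (ENNReal.tendsto_toReal (measure_ne_top μ E)).comp
    (ProbabilityMeasure.tendsto_measure_of_null_frontier_of_tendsto' hP hE)

namespace ContinuousMargins

variable {μ : Measure (ℝ × ℝ)} (h : ContinuousMargins μ)
include h

lemma measure_fst_preimage_singleton (x : ℝ) : μ (Prod.fst ⁻¹' {x}) = 0 := by
  rw [← Measure.map_apply measurable_fst (measurableSet_singleton x)]
  exact (h x).1

lemma measure_snd_preimage_singleton (y : ℝ) : μ (Prod.snd ⁻¹' {y}) = 0 := by
  rw [← Measure.map_apply measurable_snd (measurableSet_singleton y)]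
  exact (h y).2

lemma measure_frontier_fst_preimage_Iic (x : ℝ) : μ (frontier (Prod.fst ⁻¹' Iic x)) = 0 :=
  measure_mono_null ((continuous_fst.frontier_preimage_subset _).trans (by rw [frontier_Iic]))
    (h.measure_fst_preimage_singleton x)

lemma measure_frontier_snd_preimage_Iic (y : ℝ) : μ (frontier (Prod.snd ⁻¹' Iic y)) = 0 :=
  measure_mono_null ((continuous_snd.frontier_preimage_subset _).trans (by rw [frontier_Iic]))
    (h.measure_snd_preimage_singleton y)

lemma measure_frontier_Iic_prod_Iic (x y : ℝ) : μ (frontier (Iic x ×ˢ Iic y)) = 0 := by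
  rw [frontier_prod_eq, frontier_Iic, frontier_Iic]
  exact measure_union_null
    (measure_mono_null (fun p hp => hp.2) (h.measure_snd_preimage_singleton y))
    (measure_mono_null (fun p hp => hp.1) (h.measure_fst_preimage_singleton x))

end ContinuousMargins

instance (μ : Measure (ℝ × ℝ)) [IsProbabilityMeasure μ] : IsProbabilityMeasure (margFst μ) :=
  Measure.isProbabilityMeasure_map measurable_fst.aemeasurable

instance (μ : Measure (ℝ × ℝ)) [IsProbabilityMeasure μ] : IsProbabilityMeasure (margSnd μ) :=
  Measure.isProbabilityMeasure_map measurable_snd.aemeasurable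

lemma cdf_margFst (μ : Measure (ℝ × ℝ)) [IsProbabilityMeasure μ] (x : ℝ) :
    cdf (margFst μ) x = μ.real (Prod.fst ⁻¹' Iic x) := by
  rw [cdf_eq_real, margFst, map_measureReal_apply measurable_fst measurableSet_Iic]

lemma cdf_margSnd (μ : Measure (ℝ × ℝ)) [IsProbabilityMeasure μ] (y : ℝ) :
    cdf (margSnd μ) y = μ.real (Prod.snd ⁻¹' Iic y) := by
  rw [cdf_eq_real, margSnd, map_measureReal_apply measurable_snd measurableSet_Iic]

section WeakConvergence

variable {ι : Type*} {L : Filter ι} {F : ι → Measure (ℝ × ℝ)} {F₀ : Measure (ℝ × ℝ)}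
  [∀ i, IsProbabilityMeasure (F i)] [IsProbabilityMeasure F₀]
  (hweak : ∀ f : BoundedContinuousFunction (ℝ × ℝ) ℝ,
    Tendsto (fun i => ∫ p, f p ∂(F i)) L (𝓝 (∫ p, f p ∂F₀)))
  (hmarg₀ : ContinuousMargins F₀)
include hweak hmarg₀

lemma tendsto_cdf2 (x y : ℝ) : Tendsto (fun i => cdf2 (F i) x y) L (𝓝 (cdf2 F₀ x y)) :=
  tendsto_measureReal_of_null_frontier hweak (hmarg₀.measure_frontier_Iic_prod_Iic x y)

lemma tendsto_cdf_margFst (x : ℝ) :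
    Tendsto (fun i => cdf (margFst (F i)) x) L (𝓝 (cdf (margFst F₀) x)) := by
  simp only [cdf_margFst]
  exact tendsto_measureReal_of_null_frontier hweak (hmarg₀.measure_frontier_fst_preimage_Iic x)

lemma tendsto_cdf_margSnd (y : ℝ) :
    Tendsto (fun i => cdf (margSnd (F i)) y) L (𝓝 (cdf (margSnd F₀) y)) := by
  simp only [cdf_margSnd]
  exact tendsto_measureReal_of_null_frontier hweak (hmarg₀.measure_frontier_snd_preimage_Iic y)

variable {C : ι → ℝ → ℝ → ℝ} {C₀ : ℝ → ℝ → ℝ}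
  (hC : ∀ i, IsCopulaOf (C i) (F i)) (hC₀ : IsCopulaOf C₀ F₀)
include hC hC₀

lemma tendsto_copula_of_mem_Ioo {u v : ℝ} (hu : u ∈ Ioo (0:ℝ) 1) (hv : v ∈ Ioo (0:ℝ) 1) :
    Tendsto (fun i => C i u v) L (𝓝 (C₀ u v)) := by
  have : NullSingletonClass (margFst F₀) := ⟨fun x => (hmarg₀ x).1⟩
  have : NullSingletonClass (margSnd F₀) := ⟨fun y => (hmarg₀ y).2⟩
  obtain ⟨x, hx⟩ := Ioo_subset_range_cdf (margFst F₀) hu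
  obtain ⟨y, hy⟩ := Ioo_subset_range_cdf (margSnd F₀) hv
  set p : ι → ℝ × ℝ := fun i => (cdf (margFst (F i)) x, cdf (margSnd (F i)) y)
  have hp : Tendsto p L (𝓝 (u, v)) := by
    rw [← hx, ← hy]
    exact (tendsto_cdf_margFst hweak hmarg₀ x).prodMk_nhds (tendsto_cdf_margSnd hweak hmarg₀ y)
  have hclose : Tendsto (fun i => C i u v - cdf2 (F i) x y) L (𝓝 0) := by
    refine squeeze_zero_norm (fun i => ?_)
      (by simpa using ((tendsto_iff_dist_tendsto_zero.1 hp).const_mul 2))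
    have hpi : p i ∈ Icc (0:ℝ) 1 ×ˢ Icc (0:ℝ) 1 :=
      ⟨⟨cdf_nonneg _ _, cdf_le_one _ _⟩, ⟨cdf_nonneg _ _, cdf_le_one _ _⟩⟩
    rw [(hC i).2 x y, ← dist_eq_norm, dist_comm (p i)]
    exact (hC i).1.lipschitzOnWith.dist_le_mul (u, v) ⟨Ioo_subset_Icc_self hu,
      Ioo_subset_Icc_self hv⟩ (p i) hpi
  simpa [hC₀.2 x y, hx, hy] using hclose.add (tendsto_cdf2 hweak hmarg₀ x y)

lemma tendsto_copula {u v : ℝ} (hu : u ∈ Icc (0:ℝ) 1) (hv : v ∈ Icc (0:ℝ) 1) :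
    Tendsto (fun i => C i u v) L (𝓝 (C₀ u v)) := by
  by_cases hint : u ∈ Ioo (0:ℝ) 1 ∧ v ∈ Ioo (0:ℝ) 1
  · exact tendsto_copula_of_mem_Ioo hweak hmarg₀ hC hC₀ hint.1 hint.2
  · have hbdry : u ∈ ({0, 1} : Set ℝ) ∨ v ∈ ({0, 1} : Set ℝ) := by
      rw [← Icc_sdiff_Ioo_same zero_le_one]
      tauto
    simp only [fun i => (hC i).1.eq_of_mem_boundary hC₀.1 hu hv hbdry]
    exact tendsto_const_nhds

end WeakConvergence

theorem stmt2_general (F : ℕ → Measure (ℝ × ℝ)) (F₀ : Measure (ℝ × ℝ))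
    [∀ n, IsProbabilityMeasure (F n)] [IsProbabilityMeasure F₀]
    (hmarg₀ : ContinuousMargins F₀)
    (hweak : ∀ f : BoundedContinuousFunction (ℝ × ℝ) ℝ,
      Tendsto (fun n => ∫ p, f p ∂(F n)) atTop (nhds (∫ p, f p ∂F₀)))
    (C : ℕ → ℝ → ℝ → ℝ) (C₀ : ℝ → ℝ → ℝ)
    (hC : ∀ n, IsCopulaOf (C n) (F n)) (hC₀ : IsCopulaOf C₀ F₀) :
    TendstoUniformlyOn (fun n (p : ℝ × ℝ) => C n p.1 p.2) (fun p : ℝ × ℝ => C₀ p.1 p.2)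
      atTop (Icc (0:ℝ) 1 ×ˢ Icc (0:ℝ) 1) := by
  have hequi : EquicontinuousOn (fun n (p : ℝ × ℝ) => C n p.1 p.2)
      (Icc (0:ℝ) 1 ×ˢ Icc (0:ℝ) 1) :=
    (LipschitzOnWith.uniformEquicontinuousOn _ 2 fun n => (hC n).1.lipschitzOnWith).equicontinuousOn
  exact hequi.tendstoUniformlyOn_of_tendsto (isCompact_Icc.prod isCompact_Icc)
    fun _ hp => tendsto_copula hweak hmarg₀ hC hC₀ hp.1 hp.2

theorem stmt2 (F : ℕ → Measure (ℝ × ℝ)) (F₀ : Measure (ℝ × ℝ))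
    [∀ n, IsProbabilityMeasure (F n)] [IsProbabilityMeasure F₀]
    (hmarg : ∀ n, ContinuousMargins (F n)) (hmarg₀ : ContinuousMargins F₀)
    (hweak : ∀ f : BoundedContinuousFunction (ℝ × ℝ) ℝ,
      Tendsto (fun n => ∫ p, f p ∂(F n)) atTop (nhds (∫ p, f p ∂F₀)))
    (C : ℕ → ℝ → ℝ → ℝ) (C₀ : ℝ → ℝ → ℝ)
    (hC : ∀ n, IsCopulaOf (C n) (F n)) (hC₀ : IsCopulaOf C₀ F₀) :
    TendstoUniformlyOn (fun n (p : ℝ × ℝ) => C n p.1 p.2) (fun p : ℝ × ℝ => C₀ p.1 p.2)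
      atTop (Icc (0:ℝ) 1 ×ˢ Icc (0:ℝ) 1) :=
  stmt2_general F F₀ hmarg₀ hweak C C₀ hC hC₀
end
end

section
/- Let (X_1, X_2) be a random vector with continuous margins, square-integrable coordinates, and Var(X_2) > 0. Then the function ρ̃(c,d) = (E[(X_1+c)(X_2+d)])² / (E[(X_1+c)²] E[(X_2+d)²]) on [0,∞)² is not constant. -/
open MeasureTheory ProbabilityTheory Set Filter

noncomputable section

/-!
Fix `c ≥ 0` with `P = E[X₁ + c] ≠ 0` and put `Q = E[(X₁ + c) X₂]`. Then
`ρ̃(c, d) = (Q + d P)² / (E[(X₁ + c)²] · E[(X₂ + d)²])`, and `E[(X₁ + c)²] ≥ P² > 0` cancels.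
If the rest is constant in `d`, comparing `d = 0, 1, 2` gives `P² E[X₂²] = Q²` and `Q = P E[X₂]`,
whence `Var X₂ = 0`.
-/

section Moments

variable {α : Type*} [MeasurableSpace α] {μ : Measure α} {f g : α → ℝ}

lemma integral_mul_add_const (hf : Integrable f μ) (hfg : Integrable (fun x => f x * g x) μ)
    (d : ℝ) : ∫ x, f x * (g x + d) ∂μ = ∫ x, f x * g x ∂μ + d * ∫ x, f x ∂μ := by
  simp only [mul_add]
  rw [integral_add hfg (hf.mul_const d), integral_mul_const, mul_comm]

variable [IsProbabilityMeasure μ]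

lemma integral_add_const_sq (hf : MemLp f 2 μ) (d : ℝ) :
    ∫ x, (f x + d) ^ 2 ∂μ = ∫ x, f x ^ 2 ∂μ + 2 * d * ∫ x, f x ∂μ + d ^ 2 := by
  have hf1 : Integrable f μ := hf.integrable one_le_two
  have hsq : Integrable (fun x => f x ^ 2) μ := hf.integrable_sq
  have : (fun x => (f x + d) ^ 2) = fun x => f x ^ 2 + (2 * d * f x + d ^ 2) := by
    funext x; ring
  have hrest : Integrable (fun x => 2 * d * f x + d ^ 2) μ :=
    (hf1.const_mul _).add (integrable_const _)
  rw [this, integral_add hsq hrest, integral_add (hf1.const_mul _) (integrable_const _),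
    integral_const_mul, integral_const]
  simp only [probReal_univ, smul_eq_mul, one_mul]
  ring

lemma sq_integral_le_integral_sq (hf : MemLp f 2 μ) :
    (∫ x, f x ∂μ) ^ 2 ≤ ∫ x, f x ^ 2 ∂μ := by
  have := variance_nonneg f μ
  rw [variance_eq_sub hf] at this
  simpa [Pi.pow_apply, sub_nonneg] using this

end Moments

lemma not_forall_sq_add_mul_div_eq {P Q B B₂ : ℝ} (hP : P ≠ 0) (hvar : 0 < B₂ - B ^ 2) :
    ¬ ∀ d d' : ℝ, 0 ≤ d → 0 ≤ d' →
      (Q + d * P) ^ 2 / (B₂ + 2 * d * B + d ^ 2) =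
        (Q + d' * P) ^ 2 / (B₂ + 2 * d' * B + d' ^ 2) := by
  intro h
  have hV : ∀ d : ℝ, 0 < B₂ + 2 * d * B + d ^ 2 := fun d => by nlinarith [sq_nonneg (B + d)]
  have e₁ := (div_eq_div_iff (hV 1).ne' (hV 0).ne').1 (h 1 0 zero_le_one le_rfl)
  have e₂ := (div_eq_div_iff (hV 2).ne' (hV 0).ne').1 (h 2 0 zero_le_two le_rfl)
  -- Both sides of `(Q + d P)² B₂ = Q² (B₂ + 2 d B + d²)` are quadratics in `d` agreeing at
  -- `d = 0, 1, 2`, hence coefficientwise.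
  have hlead : P ^ 2 * B₂ = Q ^ 2 := by linear_combination -e₁ + e₂ / 2
  have hlin : Q * P * B₂ = Q ^ 2 * B := by linear_combination e₁ - e₂ / 4
  have hQ : Q ≠ 0 := by
    rintro rfl
    have : 0 < P ^ 2 * B₂ := mul_pos (by positivity) (by nlinarith [sq_nonneg B])
    linarith
  have hQPB : Q = P * B := by
    have : Q ^ 2 * (Q - P * B) = 0 := by linear_combination P * hlin - Q * hlead
    simpa [hQ, sub_eq_zero] using this
  have : P ^ 2 * (B₂ - B ^ 2) = 0 := by rw [hQPB] at hlead; linear_combination hlead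
  have : 0 < P ^ 2 * (B₂ - B ^ 2) := by positivity
  linarith

theorem stmt12_general (F : Measure (ℝ × ℝ)) [IsProbabilityMeasure F]
    (h1 : Integrable (fun p : ℝ × ℝ => p.1 ^ 2) F)
    (h2 : Integrable (fun p : ℝ × ℝ => p.2 ^ 2) F)
    (hvar : 0 < (∫ p : ℝ × ℝ, p.2 ^ 2 ∂F) - (∫ p : ℝ × ℝ, p.2 ∂F) ^ 2) :
    ¬ ∀ c d c' d' : ℝ, 0 ≤ c → 0 ≤ d → 0 ≤ c' → 0 ≤ d' →
      (∫ p : ℝ × ℝ, (p.1 + c) * (p.2 + d) ∂F) ^ 2 /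
          ((∫ p : ℝ × ℝ, (p.1 + c) ^ 2 ∂F) * (∫ p : ℝ × ℝ, (p.2 + d) ^ 2 ∂F)) =
        (∫ p : ℝ × ℝ, (p.1 + c') * (p.2 + d') ∂F) ^ 2 /
          ((∫ p : ℝ × ℝ, (p.1 + c') ^ 2 ∂F) * (∫ p : ℝ × ℝ, (p.2 + d') ^ 2 ∂F)) := by
  intro h
  have hX₁ : MemLp (fun p : ℝ × ℝ => p.1) 2 F :=
    (memLp_two_iff_integrable_sq measurable_fst.aestronglyMeasurable).2 h1
  have hX₂ : MemLp (fun p : ℝ × ℝ => p.2) 2 F :=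
    (memLp_two_iff_integrable_sq measurable_snd.aestronglyMeasurable).2 h2
  set c := |∫ p : ℝ × ℝ, p.1 ∂F| + 1
  have hc : 0 ≤ c := by positivity
  have hY : MemLp (fun p : ℝ × ℝ => p.1 + c) 2 F := hX₁.add (memLp_const c)
  have hP : 0 < ∫ p : ℝ × ℝ, p.1 + c ∂F := by
    rw [integral_add (hX₁.integrable one_le_two) (integrable_const c), integral_const]
    simp only [probReal_univ, smul_eq_mul, one_mul]
    linarith [neg_abs_le (∫ p : ℝ × ℝ, p.1 ∂F)]
  have hD : 0 < ∫ p : ℝ × ℝ, (p.1 + c) ^ 2 ∂F :=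
    (pow_pos hP 2).trans_le (sq_integral_le_integral_sq hY)
  have hmix : ∀ d : ℝ, ∫ p : ℝ × ℝ, (p.1 + c) * (p.2 + d) ∂F =
      ∫ p : ℝ × ℝ, (p.1 + c) * p.2 ∂F + d * ∫ p : ℝ × ℝ, p.1 + c ∂F :=
    integral_mul_add_const (hY.integrable one_le_two) (hY.integrable_mul hX₂)
  refine not_forall_sq_add_mul_div_eq (Q := ∫ p : ℝ × ℝ, (p.1 + c) * p.2 ∂F) hP.ne' hvar
    fun d d' hd hd' => ?_
  have key := h c d c d' hc hd hc hd'
  rw [hmix, hmix, integral_add_const_sq hX₂, integral_add_const_sq hX₂, mul_comm _ (_ + _),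
    mul_comm _ (_ + _), ← div_div, ← div_div, div_left_inj' hD.ne'] at key
  exact key

theorem stmt12 (F : Measure (ℝ × ℝ)) [IsProbabilityMeasure F] (hF : ContinuousMargins F)
    (h1 : Integrable (fun p : ℝ × ℝ => p.1 ^ 2) F)
    (h2 : Integrable (fun p : ℝ × ℝ => p.2 ^ 2) F)
    (hvar : 0 < (∫ p : ℝ × ℝ, p.2 ^ 2 ∂F) - (∫ p : ℝ × ℝ, p.2 ∂F) ^ 2) :
    ¬ ∀ c d c' d' : ℝ, 0 ≤ c → 0 ≤ d → 0 ≤ c' → 0 ≤ d' →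
      (∫ p : ℝ × ℝ, (p.1 + c) * (p.2 + d) ∂F) ^ 2 /
          ((∫ p : ℝ × ℝ, (p.1 + c) ^ 2 ∂F) * (∫ p : ℝ × ℝ, (p.2 + d) ^ 2 ∂F)) =
        (∫ p : ℝ × ℝ, (p.1 + c') * (p.2 + d') ∂F) ^ 2 /
          ((∫ p : ℝ × ℝ, (p.1 + c') ^ 2 ∂F) * (∫ p : ℝ × ℝ, (p.2 + d') ^ 2 ∂F)) :=
  stmt12_general F h1 h2 hvar
end
end
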